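/- arXiv:1205.2940 — 2 statements merged into one kernel-verified Lean document; each statement's English description precedes it below -/
import Mathlib

section
/- With the operators of the type-G₂ positive representation for w₀ = s₂s₁s₂s₁s₂s₁ defined in the context, for all i, j ∈ {1,2} the following operator identities hold on the space of all functions ℂ⁶ → ℂ: K_i ∘ e_j = q_i^{a_ij} · e_j ∘ K_i, where q₁ = q, q₂ = exp(πi b_s²) and (a_ij) is the G₂ Cartan matrix a₁₁ = a₂₂ = 2, a₁₂ = −1, a₂₁ = −3. -/
noncomputable section

open Complex

/-- The space of operators on all functions `ℂ⁶ → ℂ`. -/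
abbrev OpG : Type := Module.End ℂ ((Fin 6 → ℂ) → ℂ)

/-- Weyl operator `W(ℓ,δ)`: `(W(ℓ,δ) f)(x) = exp(ℓ(x + δ/2)) · f(x + δ)`. -/
def Wop (ℓ : (Fin 6 → ℂ) → ℂ) (δ : Fin 6 → ℂ) : OpG where
  toFun f := fun x => Complex.exp (ℓ (x + (2 : ℂ)⁻¹ • δ)) * f (x + δ)
  map_add' f g := by funext x; simp [mul_add]
  map_smul' c f := by funext x; simp [smul_eq_mul]; ring

/-- `b_s = b/√3`. -/
def bs (b : ℝ) : ℝ := b / Real.sqrt 3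

/-- `q = q₁ = exp(π i b²)`. -/
def qq (b : ℝ) : ℂ := Complex.exp ((Real.pi : ℂ) * Complex.I * (b : ℂ) ^ 2)

/-- `q₂ = exp(π i b_s²)`. -/
def q2 (b : ℝ) : ℂ := Complex.exp ((Real.pi : ℂ) * Complex.I * ((bs b : ℝ) : ℂ) ^ 2)

/-- The affine functional
`ℓ_α = π (b_s (cr·r + ct·t + cv·v + cl2·λ₂) + b (cs·s + cu·u + cw·w + cl1·λ₁))`,
where `(r,s,t,u,v,w) = (x 0, …, x 5)`; the variables `r,t,v` and `λ₂` carry weight `b_s`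
and `s,u,w` and `λ₁` carry weight `b`. -/
def ellG (b lam1 lam2 cr cs ct cu cv cw cl1 cl2 : ℝ) : (Fin 6 → ℂ) → ℂ := fun x =>
  (Real.pi : ℂ) * (((bs b : ℝ) : ℂ) * (cr * x 0 + ct * x 2 + cv * x 4 + cl2 * lam2)
    + (b : ℂ) * (cs * x 1 + cu * x 3 + cw * x 5 + cl1 * lam1))

/-- The shift vector `δ`, whose `x`-component is `−i·(weight of x)·d_x`. -/
def deltaG (b dr ds dt du dv dw : ℝ) : Fin 6 → ℂ :=
  ![-Complex.I * ((bs b : ℝ) : ℂ) * dr, -Complex.I * (b : ℂ) * ds,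
    -Complex.I * ((bs b : ℝ) : ℂ) * dt, -Complex.I * (b : ℂ) * du,
    -Complex.I * ((bs b : ℝ) : ℂ) * dv, -Complex.I * (b : ℂ) * dw]

/-- The operator `[α]e(Σ_x d_x p_x) = W(ℓ_α,δ) + W(−ℓ_α,δ)`. -/
def brG (b lam1 lam2 cr cs ct cu cv cw cl1 cl2 dr ds dt du dv dw : ℝ) : OpG :=
  Wop (ellG b lam1 lam2 cr cs ct cu cv cw cl1 cl2) (deltaG b dr ds dt du dv dw)
    + Wop (fun x => -(ellG b lam1 lam2 cr cs ct cu cv cw cl1 cl2 x))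
        (deltaG b dr ds dt du dv dw)

/-- `e₁ = [w]e(−p_w)`. -/
def e1 (b lam1 lam2 : ℝ) : OpG :=
  brG b lam1 lam2 0 0 0 0 0 1 0 0 0 0 0 0 0 (-1)

/-- `e₂ = [r]e(−p_r−p_s−p_t+p_v+p_w) + [s−t]e(−p_s−2p_t+p_v+p_w) + [u−2v]e(−p_u−p_v+p_w)
  + (q₂+q₂⁻¹)[t−v]e(−p_t−p_u+p_w) + [2t−u]e(−2p_t−p_u+p_v+p_w) + [v−w]e(−p_v)`. -/
def e2 (b lam1 lam2 : ℝ) : OpG :=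
  brG b lam1 lam2 1 0 0 0 0 0 0 0 (-1) (-1) (-1) 0 1 1
    + brG b lam1 lam2 0 1 (-1) 0 0 0 0 0 0 (-1) (-2) 0 1 1
    + brG b lam1 lam2 0 0 0 1 (-2) 0 0 0 0 0 0 (-1) (-1) 1
    + (q2 b + (q2 b)⁻¹) • brG b lam1 lam2 0 0 1 0 (-1) 0 0 0 0 0 (-1) (-1) 0 1
    + brG b lam1 lam2 0 0 2 (-1) 0 0 0 0 0 0 (-2) (-1) 1 1
    + brG b lam1 lam2 0 0 0 0 1 (-1) 0 0 0 0 0 0 (-1) 0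

/-- `K₁ = W(π(2bλ₁ + 3b_s(r+t+v) − 2b(s+u+w)), 0)`. -/
def K1 (b lam1 lam2 : ℝ) : OpG := Wop (ellG b lam1 lam2 3 (-2) 3 (-2) 3 (-2) 2 0) 0

/-- `K₂ = W(π(2b_sλ₂ − 2b_s(r+t+v) + b(s+u+w)), 0)`. -/
def K2 (b lam1 lam2 : ℝ) : OpG := Wop (ellG b lam1 lam2 (-2) 1 (-2) 1 (-2) 1 0 2) 0

/-- The G₂ Cartan matrix `a₁₁ = a₂₂ = 2, a₁₂ = −1, a₂₁ = −3`. -/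
def aG : Fin 2 → Fin 2 → ℤ := ![![2, -1], ![-3, 2]]

/-- `q₁ = q`, `q₂ = exp(π i b_s²)`. -/
def qi (b : ℝ) : Fin 2 → ℂ := ![qq b, q2 b]


lemma Wop_comm (ℓK ℓ : (Fin 6 → ℂ) → ℂ) (δ : Fin 6 → ℂ) (μ : ℂ)
    (h : ∀ x, ℓK (x + δ) = ℓK x + μ) :
    Wop ℓK 0 * Wop ℓ δ = Complex.exp (-μ) • (Wop ℓ δ * Wop ℓK 0) := by
  apply LinearMap.ext; intro f; funext x
  simp only [Wop, Module.End.mul_apply, LinearMap.coe_mk, AddHom.coe_mk,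
    LinearMap.smul_apply, Pi.smul_apply, smul_eq_mul, smul_zero, add_zero]
  rw [h x, Complex.exp_add, Complex.exp_neg]
  field_simp [Complex.exp_ne_zero]

lemma ell_shift (b lam1 lam2 cr cs ct cu cv cw cl1 cl2 dr ds dt du dv dw : ℝ)
    (x : Fin 6 → ℂ) :
    ellG b lam1 lam2 cr cs ct cu cv cw cl1 cl2 (x + deltaG b dr ds dt du dv dw)
      = ellG b lam1 lam2 cr cs ct cu cv cw cl1 cl2 x
        + -((Real.pi : ℂ) * Complex.I * (((bs b : ℝ) : ℂ) ^ 2 * (cr * dr + ct * dt + cv * dv)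
            + (b : ℂ) ^ 2 * (cs * ds + cu * du + cw * dw))) := by
  simp only [ellG, Pi.add_apply,
    show deltaG b dr ds dt du dv dw 0 = -Complex.I * ((bs b : ℝ) : ℂ) * dr from rfl,
    show deltaG b dr ds dt du dv dw 1 = -Complex.I * (b : ℂ) * ds from rfl,
    show deltaG b dr ds dt du dv dw 2 = -Complex.I * ((bs b : ℝ) : ℂ) * dt from rfl,
    show deltaG b dr ds dt du dv dw 3 = -Complex.I * (b : ℂ) * du from rfl,
    show deltaG b dr ds dt du dv dw 4 = -Complex.I * ((bs b : ℝ) : ℂ) * dv from rfl,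
    show deltaG b dr ds dt du dv dw 5 = -Complex.I * (b : ℂ) * dw from rfl]
  ring

lemma brG_comm {b lam1 lam2 KR KS KT KU KV KW KL1 KL2
    cr cs ct cu cv cw cl1 cl2 dr ds dt du dv dw : ℝ} (μ : ℂ)
    (hμ : μ = (Real.pi : ℂ) * Complex.I * (((bs b : ℝ) : ℂ) ^ 2 * (KR * dr + KT * dt + KV * dv)
      + (b : ℂ) ^ 2 * (KS * ds + KU * du + KW * dw))) :
    Wop (ellG b lam1 lam2 KR KS KT KU KV KW KL1 KL2) 0
      * brG b lam1 lam2 cr cs ct cu cv cw cl1 cl2 dr ds dt du dv dw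
    = Complex.exp μ • (brG b lam1 lam2 cr cs ct cu cv cw cl1 cl2 dr ds dt du dv dw
        * Wop (ellG b lam1 lam2 KR KS KT KU KV KW KL1 KL2) 0) := by
  have h : ∀ x, ellG b lam1 lam2 KR KS KT KU KV KW KL1 KL2
      (x + deltaG b dr ds dt du dv dw)
      = ellG b lam1 lam2 KR KS KT KU KV KW KL1 KL2 x + -μ := by
    intro x; rw [ell_shift, hμ]
  unfold brG
  rw [mul_add, add_mul, smul_add, Wop_comm _ _ _ _ h, Wop_comm _ _ _ _ h, neg_neg]

lemma comm_add {K X Y : OpG} {c : ℂ} (hX : K * X = c • (X * K))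
    (hY : K * Y = c • (Y * K)) : K * (X + Y) = c • ((X + Y) * K) := by
  rw [mul_add, add_mul, smul_add, hX, hY]

lemma comm_smul {K X : OpG} {c a : ℂ} (hX : K * X = c • (X * K)) :
    K * (a • X) = c • ((a • X) * K) := by
  rw [mul_smul_comm, hX, smul_mul_assoc, smul_comm]

lemma bs_sq (b : ℝ) : (bs b) ^ 2 * 3 = b ^ 2 := by
  rw [bs, div_pow, Real.sq_sqrt (by norm_num : (0:ℝ) ≤ 3)]
  field_simp

lemma bs_sqC (b : ℝ) : ((bs b : ℝ) : ℂ) ^ 2 * 3 = (b : ℂ) ^ 2 := by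
  exact_mod_cast congrArg (Complex.ofReal) (bs_sq b)

/-- `K_i e_j = q_i^{a_ij} e_j K_i` for the type-G₂ positive representation
corresponding to `w₀ = s₂s₁s₂s₁s₂s₁`. -/
theorem G2_K_relations (b lam1 lam2 : ℝ) (hb0 : 0 < b) (hb1 : b < 1)
    (hirr : Irrational (b ^ 2)) : ∀ i j : Fin 2,
    ![K1 b lam1 lam2, K2 b lam1 lam2] i * ![e1 b lam1 lam2, e2 b lam1 lam2] j
      = (qi b i ^ (aG i j)) •
        (![e1 b lam1 lam2, e2 b lam1 lam2] j * ![K1 b lam1 lam2, K2 b lam1 lam2] i) := by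
  have hB := bs_sqC b
  intro i j
  fin_cases i <;> fin_cases j <;>
    simp only [qi, aG, Fin.mk_zero, Fin.mk_one, Matrix.cons_val_zero, Matrix.cons_val_one, Matrix.head_cons, Fin.isValue]
  · -- K1, e1
    rw [show qq b ^ ((2:ℤ)) = Complex.exp (2 * (Real.pi : ℂ) * Complex.I * (b:ℂ)^2) by
      rw [qq, ← Complex.exp_int_mul]; push_cast; ring_nf]
    unfold K1 e1
    exact brG_comm _ (by push_cast; ring)
  · -- K1, e2
    rw [show qq b ^ ((-1:ℤ)) = Complex.exp (-((Real.pi : ℂ) * Complex.I * (b:ℂ)^2)) by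
      rw [qq, ← Complex.exp_int_mul]; push_cast; ring_nf]
    unfold K1 e2
    exact comm_add (comm_add (comm_add (comm_add (comm_add
      (brG_comm _ (by push_cast; linear_combination (Real.pi:ℂ) * Complex.I * hB))
      (brG_comm _ (by push_cast; linear_combination (Real.pi:ℂ) * Complex.I * hB)))
      (brG_comm _ (by push_cast; linear_combination (Real.pi:ℂ) * Complex.I * hB)))
      (comm_smul (brG_comm _ (by push_cast; linear_combination (Real.pi:ℂ) * Complex.I * hB))))
      (brG_comm _ (by push_cast; linear_combination (Real.pi:ℂ) * Complex.I * hB)))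
      (brG_comm _ (by push_cast; linear_combination (Real.pi:ℂ) * Complex.I * hB))
  · -- K2, e1
    rw [show q2 b ^ ((-3:ℤ)) = Complex.exp (-((Real.pi : ℂ) * Complex.I * (b:ℂ)^2)) by
      rw [q2, ← Complex.exp_int_mul]; congr 1; push_cast
      linear_combination (-(Real.pi:ℂ)) * Complex.I * hB]
    unfold K2 e1
    exact brG_comm _ (by push_cast; ring)
  · -- K2, e2
    rw [show q2 b ^ ((2:ℤ)) = Complex.exp (2 * (Real.pi : ℂ) * Complex.I * ((bs b:ℝ):ℂ)^2) by
      rw [q2, ← Complex.exp_int_mul]; push_cast; ring_nf]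
    unfold K2 e2
    exact comm_add (comm_add (comm_add (comm_add (comm_add
      (brG_comm _ (by push_cast; ring))
      (brG_comm _ (by push_cast; ring)))
      (brG_comm _ (by push_cast; ring)))
      (comm_smul (brG_comm _ (by push_cast; ring))))
      (brG_comm _ (by push_cast; ring)))
      (brG_comm _ (by push_cast; ring))

end
end

section
/- With the operators of the type-G₂ positive representation for w₀ = s₂s₁s₂s₁s₂s₁ defined in the context, the quantum Serre relation for the long root holds, as an identity of operators on the space of all functions ℂ⁶ → ℂ: e₁²e₂ − (q + q⁻¹) e₁e₂e₁ + e₂e₁² = 0. -/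
noncomputable section

open Complex

/-! ### Auxiliary lemmas -/

lemma exp_shuffle (a b c d e : ℂ) (z : ℂ) (h : a + b = (c + d) + e) :
    Complex.exp a * (Complex.exp b * z) = Complex.exp e * (Complex.exp c * (Complex.exp d * z)) := by
  rw [← mul_assoc, ← mul_assoc, ← mul_assoc, ← Complex.exp_add, ← Complex.exp_add,
    ← Complex.exp_add, h]
  congr 2
  ring

lemma Wop_comm_s12 (ℓ₁ ℓ₂ : (Fin 6 → ℂ) → ℂ) (δ₁ δ₂ : Fin 6 → ℂ) (d : ℂ)
    (hadd : ∀ x : Fin 6 → ℂ,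
      ℓ₁ (x + (2:ℂ)⁻¹ • δ₁) + ℓ₂ (x + δ₁ + (2:ℂ)⁻¹ • δ₂)
        = (ℓ₂ (x + (2:ℂ)⁻¹ • δ₂) + ℓ₁ (x + δ₂ + (2:ℂ)⁻¹ • δ₁)) + d) :
    Wop ℓ₁ δ₁ * Wop ℓ₂ δ₂ = Complex.exp d • (Wop ℓ₂ δ₂ * Wop ℓ₁ δ₁) := by
  apply LinearMap.ext; intro f
  funext x
  simp only [Module.End.mul_apply, LinearMap.smul_apply, Wop, LinearMap.coe_mk, AddHom.coe_mk,
    Pi.smul_apply, smul_eq_mul]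
  rw [add_assoc x δ₂ δ₁, add_comm δ₂ δ₁, ← add_assoc]
  exact exp_shuffle _ _ _ _ _ _ (hadd x)

lemma dG0 (b dr ds dt du dv dw : ℝ) : deltaG b dr ds dt du dv dw 0 = -Complex.I * ((bs b : ℝ) : ℂ) * dr := rfl
lemma dG1 (b dr ds dt du dv dw : ℝ) : deltaG b dr ds dt du dv dw 1 = -Complex.I * (b : ℂ) * ds := rfl
lemma dG2 (b dr ds dt du dv dw : ℝ) : deltaG b dr ds dt du dv dw 2 = -Complex.I * ((bs b : ℝ) : ℂ) * dt := rfl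
lemma dG3 (b dr ds dt du dv dw : ℝ) : deltaG b dr ds dt du dv dw 3 = -Complex.I * (b : ℂ) * du := rfl
lemma dG4 (b dr ds dt du dv dw : ℝ) : deltaG b dr ds dt du dv dw 4 = -Complex.I * ((bs b : ℝ) : ℂ) * dv := rfl
lemma dG5 (b dr ds dt du dv dw : ℝ) : deltaG b dr ds dt du dv dw 5 = -Complex.I * (b : ℂ) * dw := rfl

/-- Commutation of an `e₁`-type Weyl operator (with sign `s`) past a general Weyl operator. -/
lemma commA (b l1 l2 s cr cs ct cu cv cw cl1 cl2 dr ds dt du dv dw : ℝ) :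
    Wop (ellG b l1 l2 0 0 0 0 0 s 0 0) (deltaG b 0 0 0 0 0 (-1))
        * Wop (ellG b l1 l2 cr cs ct cu cv cw cl1 cl2) (deltaG b dr ds dt du dv dw)
      = Complex.exp ((Real.pi : ℂ) * Complex.I * (b:ℂ)^2 * ((cw:ℂ) + (s:ℂ)*(dw:ℂ)))
          • (Wop (ellG b l1 l2 cr cs ct cu cv cw cl1 cl2) (deltaG b dr ds dt du dv dw)
              * Wop (ellG b l1 l2 0 0 0 0 0 s 0 0) (deltaG b 0 0 0 0 0 (-1))) := by
  apply Wop_comm_s12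
  intro x
  simp only [ellG, Pi.add_apply, Pi.smul_apply, dG0, dG1, dG2, dG3, dG4, dG5, smul_eq_mul]
  push_cast
  ring

lemma serre_core (q γp γm : ℂ) (Ap Am T : OpG)
    (hpm : Am * Ap = q^2 • (Ap * Am))
    (hp : Ap * T = γp • (T * Ap)) (hm : Am * T = γm • (T * Am)) :
    (Ap + Am)^2 * T - (q + q⁻¹) • ((Ap + Am) * T * (Ap + Am)) + T * (Ap + Am)^2
      = (γp*γp - (q+q⁻¹)*γp + 1) • (T * (Ap * Ap))
        + (γm*γm - (q+q⁻¹)*γm + 1) • (T * (Am * Am))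
        + ((γp*γm - (q+q⁻¹)*γp + 1) + (γp*γm - (q+q⁻¹)*γm + 1) * q^2) • (T * (Ap * Am)) := by
  have hAA : Ap * Ap * T = (γp*γp) • (T * (Ap * Ap)) := by
    rw [mul_assoc, hp, mul_smul_comm, ← mul_assoc, hp, smul_mul_assoc, smul_smul, mul_assoc]
  have hMM : Am * Am * T = (γm*γm) • (T * (Am * Am)) := by
    rw [mul_assoc, hm, mul_smul_comm, ← mul_assoc, hm, smul_mul_assoc, smul_smul, mul_assoc]
  have hAM : Ap * Am * T = (γm*γp) • (T * (Ap * Am)) := by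
    rw [mul_assoc, hm, mul_smul_comm, ← mul_assoc, hp, smul_mul_assoc, smul_smul, mul_assoc]
  have hMA : Am * Ap * T = ((γp*γm) * q^2) • (T * (Ap * Am)) := by
    rw [mul_assoc, hp, mul_smul_comm, ← mul_assoc, hm, smul_mul_assoc, smul_smul, mul_assoc,
      hpm, mul_smul_comm, smul_smul]
  have h5 : Ap * T * Am = γp • (T * (Ap * Am)) := by
    rw [hp, smul_mul_assoc, mul_assoc]
  have h6 : Am * T * Ap = (γm * q^2) • (T * (Ap * Am)) := by
    rw [hm, smul_mul_assoc, mul_assoc, hpm, mul_smul_comm, smul_smul]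
  have h7 : Ap * T * Ap = γp • (T * (Ap * Ap)) := by
    rw [hp, smul_mul_assoc, mul_assoc]
  have h8 : Am * T * Am = γm • (T * (Am * Am)) := by
    rw [hm, smul_mul_assoc, mul_assoc]
  have hT : T * (Am * Ap) = q^2 • (T * (Ap * Am)) := by rw [hpm, mul_smul_comm]
  rw [sq]
  simp only [add_mul, mul_add, hAA, hMM, hAM, hMA, h5, h6, h7, h8, hT, smul_add, smul_smul]
  module

lemma serre_aux (q α β : ℂ) (hq : q ≠ 0) (Ap Am T : OpG)
    (hpm : Am * Ap = q^2 • (Ap * Am))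
    (hp : Ap * T = α • (T * Ap)) (hm : Am * T = β • (T * Am))
    (hcase : (α = q ∧ β = q⁻¹) ∨ (α = q ∧ β = q) ∨ (α = q⁻¹ ∧ β = q⁻¹)) :
    (Ap + Am)^2 * T - (q + q⁻¹) • ((Ap + Am) * T * (Ap + Am)) + T * (Ap + Am)^2 = 0 := by
  rw [serre_core q α β Ap Am T hpm hp hm]
  rcases hcase with ⟨ha, hb⟩ | ⟨ha, hb⟩ | ⟨ha, hb⟩ <;> subst ha <;> subst hb <;>
    · match_scalars <;> field_simp <;> ring

/-- One Serre-relation building block: for a single Weyl operator whose `w`-data `(cw, dw)` is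
one of `(0,1)`, `(1,0)`, `(-1,0)`, the Serre combination with the two `e₁` Weyl components
vanishes. -/
lemma serre_single (b l1 l2 cr cs ct cu cv cw cl1 cl2 dr ds dt du dv dw : ℝ)
    (h : (cw = 0 ∧ dw = 1) ∨ (cw = 1 ∧ dw = 0) ∨ (cw = -1 ∧ dw = 0)) :
    (Wop (ellG b l1 l2 0 0 0 0 0 1 0 0) (deltaG b 0 0 0 0 0 (-1))
        + Wop (ellG b l1 l2 0 0 0 0 0 (-1) 0 0) (deltaG b 0 0 0 0 0 (-1)))^2
        * Wop (ellG b l1 l2 cr cs ct cu cv cw cl1 cl2) (deltaG b dr ds dt du dv dw)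
      - (qq b + (qq b)⁻¹) • ((Wop (ellG b l1 l2 0 0 0 0 0 1 0 0) (deltaG b 0 0 0 0 0 (-1))
            + Wop (ellG b l1 l2 0 0 0 0 0 (-1) 0 0) (deltaG b 0 0 0 0 0 (-1)))
          * Wop (ellG b l1 l2 cr cs ct cu cv cw cl1 cl2) (deltaG b dr ds dt du dv dw)
          * (Wop (ellG b l1 l2 0 0 0 0 0 1 0 0) (deltaG b 0 0 0 0 0 (-1))
            + Wop (ellG b l1 l2 0 0 0 0 0 (-1) 0 0) (deltaG b 0 0 0 0 0 (-1))))
      + Wop (ellG b l1 l2 cr cs ct cu cv cw cl1 cl2) (deltaG b dr ds dt du dv dw)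
          * (Wop (ellG b l1 l2 0 0 0 0 0 1 0 0) (deltaG b 0 0 0 0 0 (-1))
            + Wop (ellG b l1 l2 0 0 0 0 0 (-1) 0 0) (deltaG b 0 0 0 0 0 (-1)))^2 = 0 := by
  have hq : qq b ≠ 0 := Complex.exp_ne_zero _
  have hpm : Wop (ellG b l1 l2 0 0 0 0 0 (-1) 0 0) (deltaG b 0 0 0 0 0 (-1))
      * Wop (ellG b l1 l2 0 0 0 0 0 1 0 0) (deltaG b 0 0 0 0 0 (-1))
      = (qq b)^2 • (Wop (ellG b l1 l2 0 0 0 0 0 1 0 0) (deltaG b 0 0 0 0 0 (-1))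
          * Wop (ellG b l1 l2 0 0 0 0 0 (-1) 0 0) (deltaG b 0 0 0 0 0 (-1))) := by
    rw [commA b l1 l2 (-1) 0 0 0 0 0 1 0 0 0 0 0 0 0 (-1)]
    congr 1
    rw [qq, ← Complex.exp_nat_mul]
    congr 1
    push_cast
    ring
  have hp := commA b l1 l2 1 cr cs ct cu cv cw cl1 cl2 dr ds dt du dv dw
  have hm := commA b l1 l2 (-1) cr cs ct cu cv cw cl1 cl2 dr ds dt du dv dw
  refine serre_aux (qq b) _ _ hq _ _ _ hpm hp hm ?_
  rcases h with ⟨h1, h2⟩ | ⟨h1, h2⟩ | ⟨h1, h2⟩ <;> subst h1 <;> subst h2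
  · left
    constructor
    · rw [qq]; congr 1; push_cast; ring
    · rw [qq, ← Complex.exp_neg]; congr 1; push_cast; ring
  · right; left
    constructor
    · rw [qq]; congr 1; push_cast; ring
    · rw [qq]; congr 1; push_cast; ring
  · right; right
    constructor
    · rw [qq, ← Complex.exp_neg]; congr 1; push_cast; ring
    · rw [qq, ← Complex.exp_neg]; congr 1; push_cast; ring

lemma L_add (A T1 T2 : OpG) (s : ℂ)
    (h1 : A^2 * T1 - s • (A * T1 * A) + T1 * A^2 = 0)
    (h2 : A^2 * T2 - s • (A * T2 * A) + T2 * A^2 = 0) :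
    A^2 * (T1 + T2) - s • (A * (T1 + T2) * A) + (T1 + T2) * A^2 = 0 := by
  have : A^2 * (T1 + T2) - s • (A * (T1 + T2) * A) + (T1 + T2) * A^2
      = (A^2 * T1 - s • (A * T1 * A) + T1 * A^2) + (A^2 * T2 - s • (A * T2 * A) + T2 * A^2) := by
    simp only [mul_add, add_mul, smul_add]
    abel
  rw [this, h1, h2, add_zero]

lemma L_smul (A T : OpG) (s c : ℂ)
    (h : A^2 * T - s • (A * T * A) + T * A^2 = 0) :
    A^2 * (c • T) - s • (A * (c • T) * A) + (c • T) * A^2 = 0 := by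
  have : A^2 * (c • T) - s • (A * (c • T) * A) + (c • T) * A^2
      = c • (A^2 * T - s • (A * T * A) + T * A^2) := by
    simp only [mul_smul_comm, smul_mul_assoc, smul_sub, smul_add, smul_smul, mul_comm s c]
  rw [this, h, smul_zero]

lemma neg_ellG (b l1 l2 cr cs ct cu cv cw cl1 cl2 : ℝ) :
    (fun x => -(ellG b l1 l2 cr cs ct cu cv cw cl1 cl2 x))
      = ellG b l1 l2 (-cr) (-cs) (-ct) (-cu) (-cv) (-cw) (-cl1) (-cl2) := by
  funext x
  simp only [ellG]
  push_cast
  ring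

/-- the quantum Serre relation for the long root of the type-G₂ positive
representation corresponding to `w₀ = s₂s₁s₂s₁s₂s₁`: `e₁²e₂ − (q+q⁻¹)e₁e₂e₁ + e₂e₁² = 0`. -/
theorem G2_Serre_long (b lam1 lam2 : ℝ) (hb0 : 0 < b) (hb1 : b < 1)
    (hirr : Irrational (b ^ 2)) :
    e1 b lam1 lam2 ^ 2 * e2 b lam1 lam2
      - (qq b + (qq b)⁻¹) • (e1 b lam1 lam2 * e2 b lam1 lam2 * e1 b lam1 lam2)
      + e2 b lam1 lam2 * e1 b lam1 lam2 ^ 2 = 0 := by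
  simp only [e1, e2, brG, neg_ellG, neg_zero, neg_neg]
  refine L_add _ _ _ _ (L_add _ _ _ _ (L_add _ _ _ _ (L_add _ _ _ _ (L_add _ _ _ _ ?_ ?_) ?_)
    (L_smul _ _ _ _ ?_)) ?_) ?_ <;>
  refine L_add _ _ _ _ (serre_single _ _ _ _ _ _ _ _ _ _ _ _ _ _ _ _ _ (by norm_num))
    (serre_single _ _ _ _ _ _ _ _ _ _ _ _ _ _ _ _ _ (by norm_num))
end
end
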